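/- Let A, Ã be n×n complex matrices with ‖A − Ã‖ ≤ β, and suppose Ã = U R V where U and V are n×n unitary matrices and R is upper triangular. For 0 < r < n, let S be the n×r matrix consisting of the first r columns of U, and let R₂₂ be the lower-right (n−r)×(n−r) block of R. Then ‖(SS* − I)·A‖ ≤ ‖R₂₂‖ + β. -/

import Mathlib

/-! Split `Fin n = Fin r ⊕ Fin (n - r)` and let `E`, `F` be the matching column selections of the
identity, so that `E Eᴴ + F Fᴴ = 1` and `S = U E`. Then `1 - S Sᴴ = (U F)(U F)ᴴ`, and triangularity
of `R` gives `Fᴴ R = R₂₂ Fᴴ`, hence `(1 - S Sᴴ) Ã = (U F) R₂₂ (Vᴴ F)ᴴ`. Since `U F` and `Vᴴ F` have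
orthonormal columns, `‖(1 - S Sᴴ)(A - Ã)‖ ≤ ‖A - Ã‖` and `‖(1 - S Sᴴ) Ã‖ ≤ ‖R₂₂‖`. -/

open Matrix

/-- The Euclidean norm of a vector in `ℂⁿ`. -/
noncomputable def enorm {n : ℕ} (v : Fin n → ℂ) : ℝ :=
  Real.sqrt (∑ i, ‖v i‖ ^ 2)

/-- The spectral norm (`ℓ² → ℓ²` operator norm) of a complex matrix:
the supremum of `‖Av‖` over Euclidean-unit vectors `v`. -/
noncomputable def specNorm {m n : ℕ} (A : Matrix (Fin m) (Fin n) ℂ) : ℝ :=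
  sSup {s | ∃ v : Fin n → ℂ, _root_.enorm v = 1 ∧ s = _root_.enorm (A.mulVec v)}

open scoped Matrix.Norms.L2Operator

lemma enorm_eq_norm_toLp {n : ℕ} (v : Fin n → ℂ) : _root_.enorm v = ‖WithLp.toLp 2 v‖ := by
  simp [_root_.enorm, EuclideanSpace.norm_eq]

lemma specNorm_eq_l2_opNorm {m n : ℕ} (A : Matrix (Fin m) (Fin n) ℂ) : specNorm A = ‖A‖ := by
  rw [l2_opNorm_def, ← ContinuousLinearMap.sSup_sphere_eq_norm, specNorm]
  congr 1
  ext s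
  constructor
  · rintro ⟨v, hv, rfl⟩
    exact ⟨WithLp.toLp 2 v, by simpa [enorm_eq_norm_toLp] using hv,
      by simp [enorm_eq_norm_toLp]⟩
  · rintro ⟨x, hx, rfl⟩
    exact ⟨x.ofLp, by simpa [enorm_eq_norm_toLp] using hx, by rw [enorm_eq_norm_toLp]; rfl⟩

namespace Matrix

variable {𝕜 : Type*} [RCLike 𝕜]

lemma l2_opNorm_one_le {ι : Type*} [Fintype ι] [DecidableEq ι] :
    ‖(1 : Matrix ι ι 𝕜)‖ ≤ 1 := by
  have h := l2_opNorm_conjTranspose_mul_self (1 : Matrix ι ι 𝕜)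
  rw [conjTranspose_one, Matrix.one_mul] at h
  nlinarith [norm_nonneg (1 : Matrix ι ι 𝕜)]

lemma l2_opNorm_le_one_of_conjTranspose_mul_self_eq_one {m n : Type*} [Fintype m] [Fintype n]
    [DecidableEq n] {W : Matrix m n 𝕜} (hW : Wᴴ * W = 1) : ‖W‖ ≤ 1 := by
  have h := l2_opNorm_conjTranspose_mul_self W
  rw [hW] at h
  nlinarith [l2_opNorm_one_le (𝕜 := 𝕜) (ι := n), norm_nonneg W]

lemma l2_opNorm_mul_mul_conjTranspose_le {m n k l : Type*} [Fintype m] [Fintype n] [Fintype k]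
    [Fintype l] [DecidableEq n] [DecidableEq k] [DecidableEq l]
    {W₁ : Matrix m k 𝕜} {W₂ : Matrix n l 𝕜} (h₁ : W₁ᴴ * W₁ = 1) (h₂ : W₂ᴴ * W₂ = 1)
    (X : Matrix k l 𝕜) : ‖W₁ * X * W₂ᴴ‖ ≤ ‖X‖ := by
  calc ‖W₁ * X * W₂ᴴ‖ ≤ ‖W₁‖ * ‖X‖ * ‖W₂ᴴ‖ :=
        (l2_opNorm_mul _ _).trans (by gcongr; exact l2_opNorm_mul _ _)
    _ ≤ 1 * ‖X‖ * 1 := by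
        rw [l2_opNorm_conjTranspose]
        gcongr
        · exact l2_opNorm_le_one_of_conjTranspose_mul_self_eq_one h₁
        · exact l2_opNorm_le_one_of_conjTranspose_mul_self_eq_one h₂
    _ = ‖X‖ := by ring

lemma conjTranspose_unitary_mul_mul_self {m n : Type*} [Fintype m] [DecidableEq m] [DecidableEq n]
    {U : Matrix m m 𝕜} (hU : U ∈ unitaryGroup m 𝕜)
    {W : Matrix m n 𝕜} (hW : Wᴴ * W = 1) : (U * W)ᴴ * (U * W) = 1 := by
  rw [conjTranspose_mul, Matrix.mul_assoc, ← Matrix.mul_assoc Uᴴ, ← star_eq_conjTranspose,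
    (mem_unitaryGroup_iff'.mp hU), Matrix.one_mul, hW]

lemma one_submatrix_id_mul {m n k : Type*} [Fintype m] [DecidableEq m] (f : k → m)
    (M : Matrix m n 𝕜) : (1 : Matrix m m 𝕜).submatrix f id * M = M.submatrix f id := by
  simpa using one_submatrix_mul f (Equiv.refl m) M

lemma mul_one_submatrix_id {m n k : Type*} [Fintype n] [DecidableEq n] (M : Matrix m n 𝕜)
    (f : k → n) : M * (1 : Matrix n n 𝕜).submatrix id f = M.submatrix id f := by
  simpa using mul_submatrix_one (Equiv.refl n) f M

lemma conjTranspose_one_submatrix_mul_self {m k : Type*} [Fintype m] [DecidableEq m]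
    [DecidableEq k] {f : k → m} (hf : Function.Injective f) :
    ((1 : Matrix m m 𝕜).submatrix id f)ᴴ * (1 : Matrix m m 𝕜).submatrix id f = 1 := by
  rw [conjTranspose_submatrix, conjTranspose_one, one_submatrix_id_mul, submatrix_submatrix,
    Function.id_comp, Function.comp_id, submatrix_one _ hf]

lemma one_submatrix_inl_mul_conjTranspose_add {ι α β : Type*} [Fintype ι] [DecidableEq ι]
    [Fintype α] [Fintype β] (e : α ⊕ β ≃ ι) :
    (1 : Matrix ι ι 𝕜).submatrix id (e ∘ Sum.inl)
        * ((1 : Matrix ι ι 𝕜).submatrix id (e ∘ Sum.inl))ᴴ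
      + (1 : Matrix ι ι 𝕜).submatrix id (e ∘ Sum.inr)
        * ((1 : Matrix ι ι 𝕜).submatrix id (e ∘ Sum.inr))ᴴ = 1 := by
  have hcols : fromCols ((1 : Matrix ι ι 𝕜).submatrix id (e ∘ Sum.inl))
      ((1 : Matrix ι ι 𝕜).submatrix id (e ∘ Sum.inr)) = (1 : Matrix ι ι 𝕜).submatrix id e := by
    ext i (j | j) <;> rfl
  rw [← fromCols_mul_fromRows, ← conjTranspose_fromCols_eq_fromRows_conjTranspose, hcols,
    conjTranspose_submatrix, submatrix_mul_equiv, conjTranspose_one, Matrix.mul_one,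
    submatrix_id_id]

lemma conjTranspose_one_submatrix_inr_mul_eq {ι α β : Type*} [Fintype ι] [DecidableEq ι]
    [Fintype α] [Fintype β] (e : α ⊕ β ≃ ι) {R : Matrix ι ι 𝕜}
    (hR : R.submatrix (e ∘ Sum.inr) (e ∘ Sum.inl) = 0) :
    ((1 : Matrix ι ι 𝕜).submatrix id (e ∘ Sum.inr))ᴴ * R
      = R.submatrix (e ∘ Sum.inr) (e ∘ Sum.inr)
        * ((1 : Matrix ι ι 𝕜).submatrix id (e ∘ Sum.inr))ᴴ := by
  set E := (1 : Matrix ι ι 𝕜).submatrix id (e ∘ Sum.inl)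
  set F := (1 : Matrix ι ι 𝕜).submatrix id (e ∘ Sum.inr)
  calc Fᴴ * R = R.submatrix (e ∘ Sum.inr) id * (E * Eᴴ + F * Fᴴ) := by
        rw [one_submatrix_inl_mul_conjTranspose_add, Matrix.mul_one, conjTranspose_submatrix,
          conjTranspose_one, one_submatrix_id_mul]
    _ = R.submatrix (e ∘ Sum.inr) (e ∘ Sum.inr) * Fᴴ := by
        rw [Matrix.mul_add, ← Matrix.mul_assoc, ← Matrix.mul_assoc, mul_one_submatrix_id,
          mul_one_submatrix_id]
        simp only [submatrix_submatrix, Function.comp_id, Function.id_comp, hR, Matrix.zero_mul,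
          zero_add]

lemma one_sub_submatrix_inl_mul_conjTranspose {ι α β : Type*} [Fintype ι] [DecidableEq ι]
    [Fintype α] [Fintype β] (e : α ⊕ β ≃ ι) {U : Matrix ι ι 𝕜} (hU : U ∈ unitaryGroup ι 𝕜) :
    1 - U.submatrix id (e ∘ Sum.inl) * (U.submatrix id (e ∘ Sum.inl))ᴴ
      = U * (1 : Matrix ι ι 𝕜).submatrix id (e ∘ Sum.inr)
        * (U * (1 : Matrix ι ι 𝕜).submatrix id (e ∘ Sum.inr))ᴴ := by
  set E := (1 : Matrix ι ι 𝕜).submatrix id (e ∘ Sum.inl)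
  set F := (1 : Matrix ι ι 𝕜).submatrix id (e ∘ Sum.inr)
  rw [← mul_one_submatrix_id U]
  calc 1 - U * E * (U * E)ᴴ = U * (E * Eᴴ + F * Fᴴ) * Uᴴ - U * E * (U * E)ᴴ := by
        rw [one_submatrix_inl_mul_conjTranspose_add, Matrix.mul_one, ← star_eq_conjTranspose,
          mem_unitaryGroup_iff.mp hU]
    _ = U * F * (U * F)ᴴ := by
        simp only [conjTranspose_mul, Matrix.mul_add, Matrix.add_mul, Matrix.mul_assoc]
        abel

theorem l2_opNorm_deflation_le {ι α β : Type*} [Fintype ι] [DecidableEq ι] [Fintype α]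
    [Fintype β] [DecidableEq β] (e : α ⊕ β ≃ ι) {A At U R V : Matrix ι ι 𝕜}
    (hU : U ∈ unitaryGroup ι 𝕜) (hV : V ∈ unitaryGroup ι 𝕜)
    (hR : R.submatrix (e ∘ Sum.inr) (e ∘ Sum.inl) = 0) (hURV : At = U * R * V) :
    ‖(U.submatrix id (e ∘ Sum.inl) * (U.submatrix id (e ∘ Sum.inl))ᴴ - 1) * A‖
      ≤ ‖R.submatrix (e ∘ Sum.inr) (e ∘ Sum.inr)‖ + ‖A - At‖ := by
  set F := (1 : Matrix ι ι 𝕜).submatrix id (e ∘ Sum.inr)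
  set R₂₂ := R.submatrix (e ∘ Sum.inr) (e ∘ Sum.inr)
  have hFF : Fᴴ * F = 1 :=
    conjTranspose_one_submatrix_mul_self (e.injective.comp Sum.inr_injective)
  have hUF : (U * F)ᴴ * (U * F) = 1 := conjTranspose_unitary_mul_mul_self hU hFF
  have hVF : (Vᴴ * F)ᴴ * (Vᴴ * F) = 1 :=
    conjTranspose_unitary_mul_mul_self (Unitary.star_mem hV) hFF
  have hres : U * F * (U * F)ᴴ * At = U * F * R₂₂ * (Vᴴ * F)ᴴ := by
    rw [hURV, conjTranspose_mul, conjTranspose_mul, conjTranspose_conjTranspose]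
    simp only [Matrix.mul_assoc]
    rw [← Matrix.mul_assoc Uᴴ U, ← star_eq_conjTranspose, mem_unitaryGroup_iff'.mp hU,
      Matrix.one_mul, ← Matrix.mul_assoc Fᴴ R, conjTranspose_one_submatrix_inr_mul_eq e hR,
      Matrix.mul_assoc]
  have hP : ‖U * F * (U * F)ᴴ‖ ≤ 1 := by
    simpa using (l2_opNorm_mul_mul_conjTranspose_le hUF hUF (1 : Matrix β β 𝕜)).trans
      l2_opNorm_one_le
  calc ‖(U.submatrix id (e ∘ Sum.inl) * (U.submatrix id (e ∘ Sum.inl))ᴴ - 1) * A‖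
      = ‖U * F * (U * F)ᴴ * (A - At) + U * F * (U * F)ᴴ * At‖ := by
        rw [← norm_neg, ← neg_mul, neg_sub, one_sub_submatrix_inl_mul_conjTranspose e hU,
          ← Matrix.mul_add, sub_add_cancel]
    _ ≤ ‖U * F * (U * F)ᴴ‖ * ‖A - At‖ + ‖U * F * R₂₂ * (Vᴴ * F)ᴴ‖ := by
        rw [hres]
        exact (norm_add_le _ _).trans (by gcongr; exact l2_opNorm_mul _ _)
    _ ≤ 1 * ‖A - At‖ + ‖R₂₂‖ := by
        gcongr
        exact l2_opNorm_mul_mul_conjTranspose_le hUF hVF _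
    _ = ‖R₂₂‖ + ‖A - At‖ := by ring

end Matrix

/-- Let `‖A − Ã‖ ≤ β` and `Ã = U R V` with `U, V` unitary and `R` upper triangular.  For
`0 < r < n`, let `S` be the `n×r` matrix of the first `r` columns of `U` and `R₂₂` the
lower-right `(n−r)×(n−r)` block of `R`.  Then `‖(SS* − I)A‖ ≤ ‖R₂₂‖ + β`. -/
theorem deflate_range_bound {n r : ℕ} (hrn : r < n) (β : ℝ)
    (A At U R V : Matrix (Fin n) (Fin n) ℂ)
    (hAAt : specNorm (A - At) ≤ β)
    (hU : U ∈ Matrix.unitaryGroup (Fin n) ℂ)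
    (hV : V ∈ Matrix.unitaryGroup (Fin n) ℂ)
    (hR : R.BlockTriangular (id : Fin n → Fin n))
    (hURV : At = U * R * V) :
    specNorm
        (((Matrix.of fun i (j : Fin r) => U i (Fin.castLE hrn.le j)) *
            (Matrix.of fun i (j : Fin r) => U i (Fin.castLE hrn.le j))ᴴ
          - (1 : Matrix (Fin n) (Fin n) ℂ)) * A)
      ≤ specNorm
          (Matrix.of fun (i j : Fin (n - r)) =>
            R ⟨r + (i : ℕ), by omega⟩ ⟨r + (j : ℕ), by omega⟩) + β := by
  let e : Fin r ⊕ Fin (n - r) ≃ Fin n := finSumFinEquiv.trans (finCongr (by omega))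
  have hR₂₁ : R.submatrix (e ∘ Sum.inr) (e ∘ Sum.inl) = 0 := by
    ext i j
    exact hR (Fin.lt_def.mpr (show (j : ℕ) < r + i by omega))
  rw [specNorm_eq_l2_opNorm] at hAAt
  rw [specNorm_eq_l2_opNorm, specNorm_eq_l2_opNorm]
  exact (l2_opNorm_deflation_le e hU hV hR₂₁ hURV).trans (add_le_add le_rfl hAAt)
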